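/- arXiv:2410.05594 — 2 statements merged into one kernel-verified Lean document; each statement's English description precedes it below -/
import Mathlib

section
/- Under the missing-at-random assumption S ⊥ Δ | (T, A, W, Y) and the sampling-positivity assumption P(Δ = 1 | T = t, A = a, W = w, Y = y) > 0 for all (t, w, y) with P(T = t, A = a, W = w, Y = y) > 0, one has E[S | A = a, T = t, W = w] = E[ E[S | Δ = 1, A = a, T = t, Y, W] | A = a, T = t, W = w ], i.e., the full-data conditional mean of S is identified from observations with Δ = 1. -/
/-!
Conditional independence of `S` and `Δ` given the stratum `Z = (T, A, W, Y)` says that, for every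
value `s`, `P(S = s, Z = z) P(Δ = 1, Z = z) = P(S = s, Δ = 1, Z = z) P(Z = z)`; summing against `s`
shows that the mean of `S` on a stratum equals its mean on the observed part of that stratum,
which has positive mass by sampling positivity. Splitting the event `{A = a, T = t, W = w}`
according to the value of `Y` then gives the identity, since the inner conditional mean is
constant on each piece.
-/
open Finset Real
open scoped Classical BigOperators

noncomputable section

/-- Probability of an event on a finite space with pmf `p`. -/
def pr {Ω : Type*} [Fintype Ω] (p : Ω → ℝ) (E : Ω → Prop) : ℝ :=
  ∑ ω, if E ω then p ω else 0

/-- Expectation of `f` under pmf `p`. -/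
def ex {Ω : Type*} [Fintype Ω] (p : Ω → ℝ) (f : Ω → ℝ) : ℝ :=
  ∑ ω, p ω * f ω

/-- Conditional expectation of `f` given the event `E`. -/
def cex {Ω : Type*} [Fintype Ω] (p : Ω → ℝ) (f : Ω → ℝ) (E : Ω → Prop) : ℝ :=
  (∑ ω, if E ω then p ω * f ω else 0) / pr p E

/-- Conditional probability of `E` given `F`. -/
def cpr {Ω : Type*} [Fintype Ω] (p : Ω → ℝ) (E F : Ω → Prop) : ℝ :=
  pr p (fun ω => E ω ∧ F ω) / pr p F

/-- `p` is a probability mass function. -/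
structure IsPMF {Ω : Type*} [Fintype Ω] (p : Ω → ℝ) : Prop where
  nonneg : ∀ ω, 0 ≤ p ω
  sum_one : ∑ ω, p ω = 1

/-- Conditional independence of `X` and `Y` given `Z` on a finite space. -/
def CondIndepFun {Ω : Type*} [Fintype Ω] {α β γ : Type*}
    (p : Ω → ℝ) (X : Ω → α) (Y : Ω → β) (Z : Ω → γ) : Prop :=
  ∀ x y z, 0 < pr p (fun ω => Z ω = z) →
    cpr p (fun ω => X ω = x ∧ Y ω = y) (fun ω => Z ω = z) =
      cpr p (fun ω => X ω = x) (fun ω => Z ω = z) *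
      cpr p (fun ω => Y ω = y) (fun ω => Z ω = z)

section FiniteProbability

variable {Ω : Type*} [Fintype Ω] {p : Ω → ℝ}

def setEx (p f : Ω → ℝ) (E : Ω → Prop) : ℝ :=
  ∑ ω, if E ω then p ω * f ω else 0

lemma cex_eq_setEx_div (p f : Ω → ℝ) (E : Ω → Prop) :
    cex p f E = setEx p f E / pr p E := rfl

lemma pr_nonneg (hp : ∀ ω, 0 ≤ p ω) (E : Ω → Prop) : 0 ≤ pr p E :=
  sum_nonneg fun ω _ => by split_ifs <;> simp [hp ω]

lemma pr_inter_pos_of_cpr_pos (hp : ∀ ω, 0 ≤ p ω) {E F : Ω → Prop} (h : 0 < cpr p E F) :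
    0 < pr p (fun ω => E ω ∧ F ω) :=
  (pr_nonneg hp _).lt_of_ne fun h0 => by simp [cpr, ← h0] at h

lemma setEx_eq_zero_of_pr_eq_zero (hp : ∀ ω, 0 ≤ p ω) (f : Ω → ℝ) {E : Ω → Prop}
    (h : pr p E = 0) : setEx p f E = 0 := by
  have hzero := (sum_eq_zero_iff_of_nonneg fun ω _ => by split_ifs <;> simp [hp ω]).mp h
  refine sum_eq_zero fun ω hω => ?_
  split_ifs with hE
  · simpa [hE] using congrArg (· * f ω) (hzero ω hω)
  · rfl

lemma setEx_eq_mul_pr_of_eqOn (f : Ω → ℝ) {E : Ω → Prop} {c : ℝ} (hf : ∀ ω, E ω → f ω = c) :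
    setEx p f E = c * pr p E := by
  rw [setEx, pr, mul_sum]
  refine sum_congr rfl fun ω _ => ?_
  split_ifs with hE
  · rw [hf ω hE, mul_comm]
  · rw [mul_zero]

lemma setEx_eq_sum_setEx_fiber {β : Type*} [Fintype β] (f : Ω → ℝ) (E : Ω → Prop)
    (Y : Ω → β) :
    setEx p f E = ∑ y, setEx p f (fun ω => E ω ∧ Y ω = y) := by
  simp only [setEx]
  rw [Finset.sum_comm]
  refine sum_congr rfl fun ω _ => ?_
  by_cases hE : E ω <;> simp [hE]

lemma setEx_eq_sum_mul_pr (X : Ω → ℝ) (E : Ω → Prop) :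
    setEx p X E = ∑ x ∈ univ.image X, x * pr p (fun ω => X ω = x ∧ E ω) := by
  simp_rw [setEx, pr, mul_sum, mul_ite, mul_zero]
  rw [Finset.sum_comm]
  refine sum_congr rfl fun ω _ => ?_
  rw [sum_eq_single (X ω)]
  · by_cases h : E ω <;> simp [h, mul_comm]
  · intro x _ hx
    exact if_neg fun h => hx h.1.symm
  · exact fun h => absurd (mem_image_of_mem X (mem_univ ω)) h

end FiniteProbability

namespace CondIndepFun

variable {Ω β γ : Type*} [Fintype Ω] {p : Ω → ℝ} {X : Ω → ℝ} {D : Ω → β} {Z : Ω → γ}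

lemma pr_inter_mul_pr_inter_eq (h : CondIndepFun p X D Z) {z : γ}
    (hz : 0 < pr p (fun ω => Z ω = z)) (x : ℝ) (δ : β) :
    pr p (fun ω => X ω = x ∧ Z ω = z) * pr p (fun ω => D ω = δ ∧ Z ω = z) =
      pr p (fun ω => X ω = x ∧ D ω = δ ∧ Z ω = z) * pr p (fun ω => Z ω = z) := by
  have hind := h x δ z hz
  simp only [cpr, and_assoc] at hind
  field_simp at hind
  linarith

lemma setEx_eq_cex_mul_pr (hp : ∀ ω, 0 ≤ p ω) (h : CondIndepFun p X D Z) (δ : β) (z : γ)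
    (hpos : 0 < pr p (fun ω => Z ω = z) →
      0 < cpr p (fun ω => D ω = δ) (fun ω => Z ω = z)) :
    setEx p X (fun ω => Z ω = z) =
      cex p X (fun ω => D ω = δ ∧ Z ω = z) * pr p (fun ω => Z ω = z) := by
  rcases (pr_nonneg hp _).eq_or_lt with hz | hz
  · rw [← hz, mul_zero, setEx_eq_zero_of_pr_eq_zero hp X hz.symm]
  have hobs := pr_inter_pos_of_cpr_pos hp (hpos hz)
  rw [cex_eq_setEx_div, div_mul_eq_mul_div, eq_div_iff hobs.ne', setEx_eq_sum_mul_pr,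
    setEx_eq_sum_mul_pr, sum_mul, sum_mul]
  refine sum_congr rfl fun x _ => ?_
  rw [mul_assoc, mul_assoc, h.pr_inter_mul_pr_inter_eq hz x δ]

end CondIndepFun

theorem observed_data_identification
    {Ω 𝕋 𝔸 𝕎 : Type*} [Fintype Ω]
    (p : Ω → ℝ) (hp : IsPMF p)
    (T : Ω → 𝕋) (A : Ω → 𝔸) (W : Ω → 𝕎) (Y : Ω → Bool) (S : Ω → ℝ) (Δ : Ω → Bool)
    (a : 𝔸)
    (hMAR : CondIndepFun p S Δ (fun ω => (T ω, A ω, W ω, Y ω)))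
    (hpos : ∀ t w y, 0 < pr p (fun ω => T ω = t ∧ A ω = a ∧ W ω = w ∧ Y ω = y) →
      0 < cpr p (fun ω => Δ ω = true)
        (fun ω => T ω = t ∧ A ω = a ∧ W ω = w ∧ Y ω = y)) :
    ∀ t w, 0 < pr p (fun ω => A ω = a ∧ T ω = t ∧ W ω = w) →
      cex p S (fun ω => A ω = a ∧ T ω = t ∧ W ω = w) =
        cex p (fun ω => cex p S
            (fun ω' => Δ ω' = true ∧ A ω' = a ∧ T ω' = t ∧ Y ω' = Y ω ∧ W ω' = w))
          (fun ω => A ω = a ∧ T ω = t ∧ W ω = w) := by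
  intro t w _
  have hstratum : ∀ y, setEx p S (fun ω => (A ω = a ∧ T ω = t ∧ W ω = w) ∧ Y ω = y) =
      cex p S (fun ω => Δ ω = true ∧ A ω = a ∧ T ω = t ∧ Y ω = y ∧ W ω = w) *
        pr p (fun ω => (A ω = a ∧ T ω = t ∧ W ω = w) ∧ Y ω = y) := by
    intro y
    have hZ : (fun ω => (A ω = a ∧ T ω = t ∧ W ω = w) ∧ Y ω = y) =
        fun ω => (T ω, A ω, W ω, Y ω) = (t, a, w, y) := by
      ext ω; simp only [Prod.mk.injEq]; tauto
    have hobs : (fun ω => Δ ω = true ∧ A ω = a ∧ T ω = t ∧ Y ω = y ∧ W ω = w) =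
        fun ω => Δ ω = true ∧ (T ω, A ω, W ω, Y ω) = (t, a, w, y) := by
      ext ω; simp only [Prod.mk.injEq]; tauto
    rw [hZ, hobs]
    exact hMAR.setEx_eq_cex_mul_pr hp.nonneg true (t, a, w, y)
      (by simpa only [Prod.mk.injEq] using hpos t w y)
  rw [cex_eq_setEx_div, cex_eq_setEx_div, setEx_eq_sum_setEx_fiber _ _ Y,
    setEx_eq_sum_setEx_fiber _ _ Y]
  congr 1
  refine sum_congr rfl fun y _ => ?_
  rw [hstratum y, setEx_eq_mul_pr_of_eqOn _ fun ω hω => by rw [hω.2]]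
end
end

section
/- Double robustness of the full-data augmented estimating functional: for arbitrary functions Q̃ : W-values → ℝ and g̃ : W-values → (0,1], define Ψ(Q̃, g̃) = E[ (1{A=a}/g̃(W)) · (g_T(W)/g_T) · (S − Q̃(W)) ] + E[ (1{T ∈ T_ref}/g_T) · Q̃(W) ]. Then Ψ(Q̃, g̃) = ψ := E[ E[S | A=a, W] | T ∈ T_ref ] whenever either Q̃(w) = E[S | A = a, W = w] for all w in the support of W, or g̃(w) = P(A = a | W = w) for all w in the support of W. -/
open Finset Real
open scoped Classical BigOperators

noncomputable section

/-! The tower property over the fibres of `W` (a fibre of mass zero contributes nothing to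
either side) turns both sides into expectations of functions of `W`: with
`g_A(w) = P(A = a | W = w)` and `Q(w) = E[S | A = a, W = w]`, the left side becomes
`E[g_A(W) (Q(W) - Q̃(W)) g_T(W) / (g̃(W) g_T) + g_T(W) Q̃(W) / g_T]` and the right side
`E[g_T(W) Q(W)] / g_T`. On the support of `W` the integrands agree: the first term vanishes
when `Q̃ = Q`, and `g_A / g̃ = 1` when `g̃ = g_A`, since positivity keeps `g_A` away from zero. -/

section

variable {Ω : Type*} [Fintype Ω] {p : Ω → ℝ}

theorem ex_congr {f g : Ω → ℝ} (h : ∀ ω, p ω ≠ 0 → f ω = g ω) : ex p f = ex p g :=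
  sum_congr rfl fun ω _ => by
    by_cases hω : p ω = 0
    · simp [hω]
    · rw [h ω hω]

theorem ex_add (f g : Ω → ℝ) : ex p (fun ω => f ω + g ω) = ex p f + ex p g := by
  simp only [ex, mul_add, sum_add_distrib]

theorem ex_sub (f g : Ω → ℝ) : ex p (fun ω => f ω - g ω) = ex p f - ex p g := by
  simp only [ex, mul_sub, sum_sub_distrib]

theorem ex_div (f : Ω → ℝ) (c : ℝ) : ex p f / c = ex p (fun ω => f ω / c) := by
  simp only [ex, sum_div, mul_div_assoc]

theorem cex_eq_ex_indicator_mul_div (f : Ω → ℝ) (E : Ω → Prop) :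
    cex p f E = ex p (fun ω => (if E ω then 1 else 0) * f ω) / pr p E := by
  unfold cex ex
  congr 1
  exact sum_congr rfl fun ω _ => by split_ifs <;> simp_all

theorem cex_indicator (F E : Ω → Prop) :
    cex p (fun ω => if F ω then 1 else 0) E = cpr p F E := by
  unfold cex cpr pr
  congr 1
  exact sum_congr rfl fun ω _ => by split_ifs <;> simp_all

namespace IsPMF

theorem pr_pos_of_ne_zero (hp : IsPMF p) {E : Ω → Prop} {ω : Ω} (hω : E ω) (hpω : p ω ≠ 0) :
    0 < pr p E := by
  have hterm : ∀ ω', 0 ≤ if E ω' then p ω' else 0 := fun ω' => by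
    split_ifs
    exacts [hp.nonneg ω', le_rfl]
  calc 0 < if E ω then p ω else 0 := by simpa [hω] using (hp.nonneg ω).lt_of_ne' hpω
    _ ≤ pr p E := single_le_sum (fun ω' _ => hterm ω') (mem_univ ω)

theorem eq_zero_of_pr_eq_zero (hp : IsPMF p) {E : Ω → Prop} (hE : pr p E = 0) {ω : Ω}
    (hω : E ω) : p ω = 0 := by
  by_contra hpω
  exact (hp.pr_pos_of_ne_zero hω hpω).ne' hE

theorem cex_mul_pr (hp : IsPMF p) (f : Ω → ℝ) (E : Ω → Prop) :
    cex p f E * pr p E = ∑ ω, if E ω then p ω * f ω else 0 := by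
  by_cases hE : pr p E = 0
  · rw [hE, mul_zero, eq_comm]
    exact sum_eq_zero fun ω _ => by
      split_ifs with hω
      · rw [hp.eq_zero_of_pr_eq_zero hE hω, zero_mul]
      · rfl
  · exact div_mul_cancel₀ _ hE

theorem cpr_mul_cex (hp : IsPMF p) (f : Ω → ℝ) (F E : Ω → Prop) :
    cpr p F E * cex p f (fun ω => F ω ∧ E ω) =
      cex p (fun ω => (if F ω then 1 else 0) * f ω) E := by
  rw [cpr, div_mul_eq_mul_div, mul_comm, hp.cex_mul_pr, cex]
  congr 1
  exact sum_congr rfl fun ω _ => by split_ifs <;> simp_all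

theorem ex_mul_comp_eq_ex_cex_mul_comp (hp : IsPMF p) {𝕎 : Type*} (f : Ω → ℝ) (W : Ω → 𝕎)
    (h : 𝕎 → ℝ) :
    ex p (fun ω => f ω * h (W ω)) =
      ex p (fun ω => cex p f (fun ω' => W ω' = W ω) * h (W ω)) := by
  let Φ : 𝕎 → ℝ := fun w => (∑ ω, if W ω = w then p ω * f ω else 0) * h w
  have hf : ∀ ω, Φ (W ω) = ∑ ω' ∈ univ with W ω' = W ω, p ω' * (f ω' * h (W ω')) := by
    intro ω
    simp only [Φ, sum_filter, sum_mul]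
    exact sum_congr rfl fun ω' _ => by split_ifs with hω' <;> simp [hω', mul_assoc]
  have hcex : ∀ ω, Φ (W ω) =
      ∑ ω' ∈ univ with W ω' = W ω, p ω' * (cex p f (fun ω'' => W ω'' = W ω') * h (W ω')) := by
    intro ω
    rw [sum_filter, show Φ (W ω) = cex p f (fun ω' => W ω' = W ω) *
      pr p (fun ω' => W ω' = W ω) * h (W ω) from by rw [hp.cex_mul_pr], pr, mul_sum, sum_mul]
    exact sum_congr rfl fun ω' _ => by split_ifs with hω' <;> simp [hω']; ring
  exact (sum_image' _ fun ω _ => hf ω).symm.trans (sum_image' _ fun ω _ => hcex ω)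

theorem ex_indicator_mul_comp (hp : IsPMF p) {𝕎 : Type*} {F : Ω → Prop} {W : Ω → 𝕎}
    {g : 𝕎 → ℝ} (hg : ∀ w, g w = cpr p F (fun ω => W ω = w)) (h : 𝕎 → ℝ) :
    ex p (fun ω => (if F ω then 1 else 0) * h (W ω)) = ex p (fun ω => g (W ω) * h (W ω)) := by
  rw [hp.ex_mul_comp_eq_ex_cex_mul_comp _ W h]
  simp only [cex_indicator, hg]

theorem ex_indicator_mul_mul_comp (hp : IsPMF p) {𝕎 : Type*} {F : Ω → Prop} {f : Ω → ℝ}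
    {W : Ω → 𝕎} {g Q : 𝕎 → ℝ} (hg : ∀ w, g w = cpr p F (fun ω => W ω = w))
    (hQ : ∀ w, Q w = cex p f (fun ω => F ω ∧ W ω = w)) (h : 𝕎 → ℝ) :
    ex p (fun ω => (if F ω then 1 else 0) * f ω * h (W ω)) =
      ex p (fun ω => g (W ω) * Q (W ω) * h (W ω)) := by
  rw [hp.ex_mul_comp_eq_ex_cex_mul_comp (fun ω => (if F ω then 1 else 0) * f ω) W h]
  simp only [← hp.cpr_mul_cex, hg, hQ]

end IsPMF

end

theorem augmented_ipw_fiber_eq {g Q Qt gt t c : ℝ} (h : Qt = Q ∨ (gt = g ∧ g ≠ 0)) :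
    g * Q * (t / (gt * c)) - g * (Qt * (t / (gt * c))) + t * (Qt / c) = t * Q / c := by
  rcases h with rfl | ⟨rfl, hg⟩
  · ring
  · field_simp
    ring

theorem double_robustness_general
    {Ω 𝕋 𝔸 𝕎 : Type*} [Fintype Ω]
    (p : Ω → ℝ) (hp : IsPMF p)
    (T : Ω → 𝕋) (A : Ω → 𝔸) (W : Ω → 𝕎) (S : Ω → ℝ)
    (a : 𝔸) (Tref : 𝕋 → Prop)
    (gTW : 𝕎 → ℝ) (gT : ℝ)
    (hgTW : ∀ w, gTW w = cpr p (fun ω => Tref (T ω)) (fun ω => W ω = w))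
    (hgT : gT = pr p (fun ω => Tref (T ω)))
    (hgApos : ∀ w, 0 < pr p (fun ω => W ω = w) →
      0 < cpr p (fun ω => A ω = a) (fun ω => W ω = w))
    (Qt gt : 𝕎 → ℝ)
    (hrob :
      (∀ w, 0 < pr p (fun ω => W ω = w) →
        Qt w = cex p S (fun ω => A ω = a ∧ W ω = w)) ∨
      (∀ w, 0 < pr p (fun ω => W ω = w) →
        gt w = cpr p (fun ω => A ω = a) (fun ω => W ω = w))) :
    ex p (fun ω =>
        (if A ω = a then (1 : ℝ) else 0) / gt (W ω) * (gTW (W ω) / gT) *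
          (S ω - Qt (W ω))) +
      ex p (fun ω => (if Tref (T ω) then (1 : ℝ) else 0) / gT * Qt (W ω)) =
      cex p (fun ω => cex p S (fun ω' => A ω' = a ∧ W ω' = W ω))
        (fun ω => Tref (T ω)) := by
  obtain ⟨gA, hgA⟩ : ∃ gA : 𝕎 → ℝ, ∀ w, gA w = cpr p (fun ω => A ω = a) (fun ω => W ω = w) :=
    ⟨_, fun _ => rfl⟩
  obtain ⟨Q, hQ⟩ : ∃ Q : 𝕎 → ℝ, ∀ w, Q w = cex p S (fun ω => A ω = a ∧ W ω = w) :=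
    ⟨_, fun _ => rfl⟩
  let k : 𝕎 → ℝ := fun w => gTW w / (gt w * gT)
  have hfiber : ∀ w, 0 < pr p (fun ω => W ω = w) →
      gA w * Q w * k w - gA w * (Qt w * k w) + gTW w * (Qt w / gT) = gTW w * Q w / gT := by
    intro w hw
    refine augmented_ipw_fiber_eq (hrob.imp (fun hQt => ?_) fun hgt => ⟨?_, ?_⟩)
    · rw [hQ, hQt w hw]
    · rw [hgA, hgt w hw]
    · exact hgA w ▸ (hgApos w hw).ne'
  calc _ = ex p (fun ω => (if A ω = a then 1 else 0) * S ω * k (W ω)) -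
        ex p (fun ω => (if A ω = a then 1 else 0) * (Qt (W ω) * k (W ω))) +
        ex p (fun ω => (if Tref (T ω) then 1 else 0) * (Qt (W ω) / gT)) := by
          simp only [← ex_sub, ← ex_add]
          exact ex_congr fun ω _ => by ring
    _ = ex p (fun ω => gA (W ω) * Q (W ω) * k (W ω)) -
        ex p (fun ω => gA (W ω) * (Qt (W ω) * k (W ω))) +
        ex p (fun ω => gTW (W ω) * (Qt (W ω) / gT)) := by
          rw [hp.ex_indicator_mul_mul_comp hgA hQ k,
            hp.ex_indicator_mul_comp hgA (fun w => Qt w * k w),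
            hp.ex_indicator_mul_comp hgTW (fun w => Qt w / gT)]
    _ = ex p (fun ω => gTW (W ω) * Q (W ω) / gT) := by
          rw [← ex_sub, ← ex_add]
          exact ex_congr fun ω hω => hfiber (W ω) (hp.pr_pos_of_ne_zero rfl hω)
    _ = _ := by
          simp only [← hQ]
          rw [cex_eq_ex_indicator_mul_div, ← hgT, hp.ex_indicator_mul_comp hgTW Q, ex_div]

theorem double_robustness
    {Ω 𝕋 𝔸 𝕎 : Type*} [Fintype Ω]
    (p : Ω → ℝ) (hp : IsPMF p)
    (T : Ω → 𝕋) (A : Ω → 𝔸) (W : Ω → 𝕎) (S : Ω → ℝ)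
    (a : 𝔸) (Tref : 𝕋 → Prop)
    (gTW : 𝕎 → ℝ) (gT : ℝ)
    (hgTW : ∀ w, gTW w = cpr p (fun ω => Tref (T ω)) (fun ω => W ω = w))
    (hgT : gT = pr p (fun ω => Tref (T ω)))
    (hgTpos : 0 < gT)
    (hgApos : ∀ w, 0 < pr p (fun ω => W ω = w) →
      0 < cpr p (fun ω => A ω = a) (fun ω => W ω = w))
    (Qt gt : 𝕎 → ℝ)
    (hgt : ∀ w, 0 < gt w ∧ gt w ≤ 1)
    (hrob :
      (∀ w, 0 < pr p (fun ω => W ω = w) →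
        Qt w = cex p S (fun ω => A ω = a ∧ W ω = w)) ∨
      (∀ w, 0 < pr p (fun ω => W ω = w) →
        gt w = cpr p (fun ω => A ω = a) (fun ω => W ω = w))) :
    ex p (fun ω =>
        (if A ω = a then (1 : ℝ) else 0) / gt (W ω) * (gTW (W ω) / gT) *
          (S ω - Qt (W ω))) +
      ex p (fun ω => (if Tref (T ω) then (1 : ℝ) else 0) / gT * Qt (W ω)) =
      cex p (fun ω => cex p S (fun ω' => A ω' = a ∧ W ω' = W ω))
        (fun ω => Tref (T ω)) :=
  double_robustness_general p hp T A W S a Tref gTW gT hgTW hgT hgApos Qt gt hrob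
end
end
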